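/- Let $A$ be a unital based ring with $\Bbb{Z}_+$-basis $\{b_i\}_{i\in I}$. Then for any basis elements $X, Z \in \{b_i\}$, there exist basis elements $Y_1, Y_2$ such that $XY_1$ contains $Z$ with nonzero coefficient and $Y_2 X$ contains $Z$ with nonzero coefficient. -/

import Mathlib

lemma repr_mul_right (A : Type) [Ring A] (I : Type) (b : Module.Basis I ℤ A) (u : A) (x z : I) :
    b.repr (u * b x) z =
      ∑ y ∈ (b.repr u).support, b.repr u y * b.repr (b y * b x) z := by
  conv_lhs => rw [← b.linearCombination_repr u, Finsupp.linearCombination_apply, Finsupp.sum, Finset.sum_mul]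
  simp only [smul_mul_assoc, map_sum, map_smul, Finsupp.coe_finset_sum, Finset.sum_apply,
    Finsupp.coe_smul, Pi.smul_apply, smul_eq_mul]

lemma repr_mul_left (A : Type) [Ring A] (I : Type) (b : Module.Basis I ℤ A) (u : A) (x z : I) :
    b.repr (b x * u) z =
      ∑ y ∈ (b.repr u).support, b.repr u y * b.repr (b x * b y) z := by
  conv_lhs => rw [← b.linearCombination_repr u, Finsupp.linearCombination_apply, Finsupp.sum, Finset.mul_sum]
  simp only [mul_smul_comm, map_sum, map_smul, Finsupp.coe_finset_sum, Finset.sum_apply,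
    Finsupp.coe_smul, Pi.smul_apply, smul_eq_mul]

theorem based_ring_transitive (A : Type) [Ring A] (I : Type) [DecidableEq I] (b : Module.Basis I ℤ A)
    (i₀ : I) (h1 : b i₀ = 1)
    (hnonneg : ∀ i j t : I, 0 ≤ b.repr (b i * b j) t)
    (e : I ≃ I) (hinv : ∀ i, e (e i) = i)
    (hanti : ∀ i j t : I, b.repr (b i * b j) t = b.repr (b (e j) * b (e i)) (e t))
    (htau : ∀ i j : I, b.repr (b i * b j) i₀ = if j = e i then 1 else 0) :
    ∀ x z : I, ∃ y₁ y₂ : I,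
      b.repr (b x * b y₁) z ≠ 0 ∧ b.repr (b y₂ * b x) z ≠ 0 := by
  intro x z
  -- right: coefficient of z in b x * (b (e x) * b z)
  have key1 : b.repr (b x * (b (e x) * b z)) z ≠ 0 := by
    have assoc : b x * (b (e x) * b z) = (b x * b (e x)) * b z := by rw [mul_assoc]
    rw [assoc, repr_mul_right A I b (b x * b (e x)) z z]
    set v := b x * b (e x) with hv
    have hvi₀ : b.repr v i₀ = 1 := by rw [hv, htau]; simp
    have hmem : i₀ ∈ (b.repr v).support := by
      rw [Finsupp.mem_support_iff, hvi₀]; norm_num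
    have hterm : b.repr v i₀ * b.repr (b i₀ * b z) z = 1 := by
      rw [hvi₀, h1, one_mul, one_mul, b.repr_self, Finsupp.single_eq_same]
    have hpos : ∀ t ∈ (b.repr v).support, 0 ≤ b.repr v t * b.repr (b t * b z) z := by
      intro t _
      exact mul_nonneg (hnonneg x (e x) t) (hnonneg t z z)
    have := Finset.single_le_sum hpos hmem
    rw [hterm] at this
    intro h; rw [h] at this; norm_num at this
  have key2 : b.repr ((b z * b (e x)) * b x) z ≠ 0 := by
    have assoc : (b z * b (e x)) * b x = b z * (b (e x) * b x) := by rw [mul_assoc]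
    rw [assoc, repr_mul_left A I b (b (e x) * b x) z z]
    set v := b (e x) * b x with hv
    have hvi₀ : b.repr v i₀ = 1 := by rw [hv, htau]; simp [hinv]
    have hmem : i₀ ∈ (b.repr v).support := by
      rw [Finsupp.mem_support_iff, hvi₀]; norm_num
    have hterm : b.repr v i₀ * b.repr (b z * b i₀) z = 1 := by
      rw [hvi₀, h1, one_mul, mul_one, b.repr_self, Finsupp.single_eq_same]
    have hpos : ∀ t ∈ (b.repr v).support, 0 ≤ b.repr v t * b.repr (b z * b t) z := by
      intro t _
      exact mul_nonneg (hnonneg (e x) x t) (hnonneg z t z)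
    have := Finset.single_le_sum hpos hmem
    rw [hterm] at this
    intro h; rw [h] at this; norm_num at this
  rw [repr_mul_left A I b (b (e x) * b z) x z] at key1
  rw [repr_mul_right A I b (b z * b (e x)) x z] at key2
  obtain ⟨y₁, _, hy₁⟩ := Finset.exists_ne_zero_of_sum_ne_zero key1
  obtain ⟨y₂, _, hy₂⟩ := Finset.exists_ne_zero_of_sum_ne_zero key2
  exact ⟨y₁, y₂, fun h => hy₁ (by rw [h, mul_zero]), fun h => hy₂ (by rw [h, mul_zero])⟩
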